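/- A chain map f: X → Y between chain complexes over a field k which has the left lifting property with respect to all maps D^n → 0 (n ∈ ℤ) is a monomorphism. -/

import Mathlib

open CategoryTheory CategoryTheory.Limits

/-- The sphere chain complex `S^n(V)`: `V` concentrated in degree `n`. -/
noncomputable def sphere {k : Type} [CommRing k] (V : ModuleCat k) (n : ℤ) :
    ChainComplex (ModuleCat k) ℤ :=
  (HomologicalComplex.single (ModuleCat k) (ComplexShape.down ℤ) n).obj V

/-- Degree-`i` component of the disk complex `D^n(V)`. -/
noncomputable def diskX {k : Type} [CommRing k] (V : ModuleCat k) (n i : ℤ) : ModuleCat k :=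
  if i = n ∨ i = n - 1 then V else ModuleCat.of k PUnit

/-- The disk chain complex `D^n(V)`: `V` in degrees `n` and `n-1`, with identity
differential. -/
noncomputable def disk {k : Type} [CommRing k] (V : ModuleCat k) (n : ℤ) :
    ChainComplex (ModuleCat k) ℤ where
  X i := diskX V n i
  d i j :=
    if h : i = n ∧ j = n - 1 then
      eqToHom (show diskX V n i = diskX V n j by
        rw [diskX, diskX, if_pos (Or.inl h.1), if_pos (Or.inr h.2)])
    else 0
  shape i j hij := by
    try dsimp only
    rw [dif_neg]
    rintro ⟨h1, h2⟩
    exact hij (by first | (simp only [ComplexShape.down_Rel]; omega) | (dsimp [ComplexShape.down]; omega))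
  d_comp_d' i j l _ _ := by
    try dsimp only
    by_cases h : i = n ∧ j = n - 1
    · rw [dif_neg (by omega : ¬ (j = n ∧ l = n - 1))]
      simp
    · rw [dif_neg h]
      simp

/-- The canonical projection `D^n(V) ⟶ S^n(V)`, the identity in degree `n`. -/
noncomputable def diskToSphere {k : Type} [CommRing k] (V : ModuleCat k) (n : ℤ) :
    disk V n ⟶ sphere V n :=
  HomologicalComplex.mkHomToSingle
    (eqToHom (show (disk V n).X n = V by
      simp [disk, diskX]))
    (fun i hi => by
      have : ¬ (i = n ∧ n = n - 1) := by omega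
      simp only [disk, dif_neg this, zero_comp] <;> first | rfl | simp)

/-- The canonical inclusion `S^n(V) ⟶ D^{n+1}(V)`, the identity in degree `n`. -/
noncomputable def sphereToDisk {k : Type} [CommRing k] (V : ModuleCat k) (n : ℤ) :
    sphere V n ⟶ disk V (n + 1) :=
  HomologicalComplex.mkHomFromSingle
    (eqToHom (show V = (disk V (n+1)).X n by
      simp [disk, diskX]))
    (fun j hj => by
      have : ¬ (n = n + 1 ∧ j = n + 1 - 1) := by omega
      simp only [disk, dif_neg this, comp_zero] <;> first | rfl | simp)

/-!
Every linear map `φ : X_n ⟶ V` gives a chain map `X ⟶ D^{n+1}(V)`, equal to `φ` in degree `n`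
and to `φ ∘ d` in degree `n + 1`. Lifting it against `D^{n+1}(V) ⟶ 0` along `f` extends `φ`
along `f_n`. Over a field, every functional on `X_n` extending along `f_n` means that the dual
map of `f_n` is surjective, i.e. that `f_n` is injective.
-/

section Disk

variable {k : Type} [CommRing k] {V : ModuleCat k}

lemma disk_d_self {n j : ℤ} (hj : j = n - 1) :
    (disk V n).d n j = eqToHom (by simp [disk, diskX, hj]) :=
  dif_pos ⟨rfl, hj⟩

lemma disk_d_eq_zero {n i : ℤ} (j : ℤ) (hi : i ≠ n) : (disk V n).d i j = 0 :=
  dif_neg fun h => hi h.1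

noncomputable def toDisk (X : ChainComplex (ModuleCat k) ℤ) (n : ℤ) (φ : X.X n ⟶ V) :
    X ⟶ disk V (n + 1) where
  f i :=
    if hi : i = n + 1 then
      eqToHom (by rw [hi]) ≫ X.d (n + 1) n ≫ φ ≫ eqToHom (by simp [disk, diskX, hi])
    else if hi' : i = n then
      eqToHom (by rw [hi']) ≫ φ ≫ eqToHom (by simp [disk, diskX, hi'])
    else 0
  comm' i j hij := by
    simp only [ComplexShape.down_Rel] at hij
    subst hij
    by_cases hj : j = n
    · subst hj
      rw [dif_pos rfl, dif_neg (by omega), dif_pos rfl, disk_d_self (by omega)]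
      simp
    · rw [disk_d_eq_zero _ (by omega), comp_zero]
      by_cases hj' : j = n + 1
      · subst hj'
        rw [dif_pos rfl, eqToHom_refl, Category.id_comp, X.d_comp_d_assoc, zero_comp]
      · rw [dif_neg hj', dif_neg hj, comp_zero]

lemma toDisk_f_self (X : ChainComplex (ModuleCat k) ℤ) (n : ℤ) (φ : X.X n ⟶ V) :
    (toDisk X n φ).f n = φ ≫ eqToHom (by simp [disk, diskX]) := by
  simp [toDisk]

end Disk

open ZeroObject in
lemma exists_comp_eq_of_hasLiftingProperty {k : Type} [CommRing k] {V : ModuleCat k}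
    {X Y : ChainComplex (ModuleCat k) ℤ} (f : X ⟶ Y) (n : ℤ)
    [HasLiftingProperty f (0 : disk V (n + 1) ⟶ 0)] (φ : X.X n ⟶ V) :
    ∃ ψ : Y.X n ⟶ V, f.f n ≫ ψ = φ := by
  have sq : CommSq (toDisk X n φ) f (0 : disk V (n + 1) ⟶ 0) 0 := ⟨by simp⟩
  refine ⟨sq.lift.f n ≫ eqToHom (by simp [disk, diskX]), ?_⟩
  rw [← Category.assoc, ← HomologicalComplex.comp_f, sq.fac_left, toDisk_f_self]
  simp

open ZeroObject in
/-- A chain map over a field with the left lifting property with respect to all maps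
`D^n ⟶ 0` (`n ∈ ℤ`) is a monomorphism. -/
theorem mono_of_llp_disk_to_zero (k : Type) [Field k]
    {X Y : ChainComplex (ModuleCat k) ℤ} (f : X ⟶ Y)
    (h : ∀ n : ℤ, HasLiftingProperty f
      (0 : disk (ModuleCat.of k k) n ⟶ (0 : ChainComplex (ModuleCat k) ℤ))) :
    Mono f := by
  refine HomologicalComplex.mono_of_mono_f f fun n => ?_
  have := h (n + 1)
  rw [ModuleCat.mono_iff_injective, ← LinearMap.dualMap_surjective_iff]
  intro φ
  obtain ⟨ψ, hψ⟩ := exists_comp_eq_of_hasLiftingProperty f n (ModuleCat.ofHom φ)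
  exact ⟨ψ.hom, congrArg ModuleCat.Hom.hom hψ⟩
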